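/- arXiv:math/0611311 — 2 statements merged into one kernel-verified Lean document; each statement's English description precedes it below -/
import Mathlib

section
/- Let A be a Hopf algebra over a commutative ring R with antipode S, and let x ∈ A be a grouplike element. Then A admits a normalized two-sided integral if and only if A admits a normalized two-sided x-semi-invariant integral. Explicitly, if w is a normalized two-sided integral then the functional a ↦ w(S(x)·a) is a normalized two-sided x-semi-invariant integral, and conversely if w_χ is a normalized two-sided x-semi-invariant integral then a ↦ w_χ(x·a) is a normalized two-sided integral. -/
open TensorProduct

/-- The convolution product on the dual `A* = Hom_R(A, R)` of a bialgebra `A`: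
`(f * g)(a) = Σ f(a₍₁₎) · g(a₍₂₎)`. -/
noncomputable def conv {R A : Type*} [CommRing R] [Ring A] [Bialgebra R A]
    (f g : Module.Dual R A) : Module.Dual R A :=
  LinearMap.mul' R R ∘ₗ TensorProduct.map f g ∘ₗ Coalgebra.comul

/-- An element `x` of a bialgebra is grouplike if `Δ x = x ⊗ x` and `ε x = 1`. -/
def IsGroupLikeElem' (R : Type*) {A : Type*} [CommRing R] [Ring A] [Bialgebra R A]
    (x : A) : Prop :=
  Coalgebra.comul (R := R) x = x ⊗ₜ[R] x ∧ Coalgebra.counit (R := R) x = 1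

/-- For `x` grouplike, a normalized two-sided `x`-semi-invariant integral on `A` is
`w ∈ A*` with `f * w = w * f = f(x) • w` for all `f ∈ A*` and `w(x) = 1`. -/
def IsNormalizedSemiInvIntegral {R A : Type*} [CommRing R] [Ring A] [Bialgebra R A]
    (x : A) (w : Module.Dual R A) : Prop :=
  (∀ f : Module.Dual R A, conv f w = f x • w) ∧
  (∀ f : Module.Dual R A, conv w f = f x • w) ∧
  w x = 1

/-- A normalized two-sided integral on a bialgebra `A`. -/
def IsNormalizedIntegral {R A : Type*} [CommRing R] [Ring A] [Bialgebra R A]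
    (w : Module.Dual R A) : Prop :=
  (∀ f : Module.Dual R A, conv f w = f 1 • w) ∧
  (∀ f : Module.Dual R A, conv w f = f 1 • w) ∧
  w 1 = 1

/-!
Translating functionals by a grouplike `g` (that is, precomposing with `a ↦ g * a`) is
multiplicative for convolution, because `Δ (g a) = (g ⊗ g) Δ a`. If `g` is moreover invertible
with inverse `u`, every functional is such a translate, so translating a `y`-semi-invariant
integral by `g` yields a `u y`-semi-invariant one. In a Hopf algebra a grouplike `x` is invertible
with inverse `S x`, and integrals are exactly the `1`-semi-invariant integrals.
-/

section

variable {R A : Type*} [CommRing R] [Ring A]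

lemma IsGroupLikeElem'.isGroupLikeElem [Bialgebra R A] {x : A} (hx : IsGroupLikeElem' R x) :
    IsGroupLikeElem R x :=
  ⟨hx.2, hx.1⟩

lemma isNormalizedIntegral_iff [Bialgebra R A] {w : Module.Dual R A} :
    IsNormalizedIntegral w ↔ IsNormalizedSemiInvIntegral 1 w :=
  Iff.rfl

lemma conv_comp_mulLeft [Bialgebra R A] {g : A} (hg : Coalgebra.comul (R := R) g = g ⊗ₜ[R] g)
    (f h : Module.Dual R A) :
    conv (f ∘ₗ LinearMap.mulLeft R g) (h ∘ₗ LinearMap.mulLeft R g) =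
      conv f h ∘ₗ LinearMap.mulLeft R g := by
  ext a
  simp only [conv, LinearMap.comp_apply, LinearMap.mulLeft_apply]
  rw [Bialgebra.comul_mul, hg]
  induction Coalgebra.comul (R := R) a using TensorProduct.induction_on with
  | zero => simp
  | tmul b c => simp [Algebra.TensorProduct.tmul_mul_tmul]
  | add u v hu hv => simp only [mul_add, map_add, hu, hv]

lemma comp_mulLeft_comp_mulLeft_of_mul_eq_one [Algebra R A] {u g : A} (hug : u * g = 1)
    (f : Module.Dual R A) :
    (f ∘ₗ LinearMap.mulLeft R u) ∘ₗ LinearMap.mulLeft R g = f := by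
  rw [LinearMap.comp_assoc, ← LinearMap.mulLeft_mul, hug, LinearMap.mulLeft_one,
    LinearMap.comp_id]

lemma IsNormalizedSemiInvIntegral.comp_mulLeft [Bialgebra R A] {y g u : A}
    {w : Module.Dual R A} (hw : IsNormalizedSemiInvIntegral y w)
    (hg : Coalgebra.comul (R := R) g = g ⊗ₜ[R] g) (hgu : g * u = 1) (hug : u * g = 1) :
    IsNormalizedSemiInvIntegral (u * y) (w ∘ₗ LinearMap.mulLeft R g) := by
  have translate := comp_mulLeft_comp_mulLeft_of_mul_eq_one (R := R) hug
  refine ⟨fun f ↦ ?_, fun f ↦ ?_, ?_⟩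
  · conv_lhs => rw [← translate f]
    rw [conv_comp_mulLeft hg, hw.1, LinearMap.smul_comp]
    rfl
  · conv_lhs => rw [← translate f]
    rw [conv_comp_mulLeft hg, hw.2.1, LinearMap.smul_comp]
    rfl
  · simpa [← mul_assoc, hgu] using hw.2.2

end

theorem integral_iff_semiinvariant_integral {R A : Type*} [CommRing R] [Ring A]
    [HopfAlgebra R A] (x : A) (hx : IsGroupLikeElem' R x) :
    ((∃ w : Module.Dual R A, IsNormalizedIntegral w) ↔
      (∃ wχ : Module.Dual R A, IsNormalizedSemiInvIntegral x wχ)) ∧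
    (∀ w : Module.Dual R A, IsNormalizedIntegral w →
      IsNormalizedSemiInvIntegral x
        (w ∘ₗ LinearMap.mulLeft R (HopfAlgebra.antipode (R := R) x))) ∧
    (∀ wχ : Module.Dual R A, IsNormalizedSemiInvIntegral x wχ →
      IsNormalizedIntegral (wχ ∘ₗ LinearMap.mulLeft R x)) := by
  have hx := hx.isGroupLikeElem
  have toSemiInv : ∀ w : Module.Dual R A, IsNormalizedIntegral w →
      IsNormalizedSemiInvIntegral x
        (w ∘ₗ LinearMap.mulLeft R (HopfAlgebra.antipode (R := R) x)) := fun w hw ↦ by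
    simpa using (isNormalizedIntegral_iff.1 hw).comp_mulLeft
      hx.antipode.comul_eq_tmul_self hx.antipode_mul_cancel hx.mul_antipode_cancel
  have toIntegral : ∀ wχ : Module.Dual R A, IsNormalizedSemiInvIntegral x wχ →
      IsNormalizedIntegral (wχ ∘ₗ LinearMap.mulLeft R x) := fun wχ hwχ ↦ by
    rw [isNormalizedIntegral_iff, ← hx.antipode_mul_cancel]
    exact hwχ.comp_mulLeft hx.comul_eq_tmul_self hx.mul_antipode_cancel hx.antipode_mul_cancel
  exact ⟨⟨fun ⟨w, hw⟩ ↦ ⟨_, toSemiInv w hw⟩, fun ⟨wχ, hwχ⟩ ↦ ⟨_, toIntegral wχ hwχ⟩⟩,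
    toSemiInv, toIntegral⟩
end

section
/- Let A be a bialgebra over a commutative ring R, let x ∈ A be a grouplike element, let w_χ ∈ A* be a normalized two-sided x-semi-invariant integral, and let M be a left module over the convolution algebra A*. Define M^χ := {m ∈ M : f • m = f(x) • m for all f ∈ A*}. Then M^χ = w_χ • M, M^χ is an A*-submodule of M, and M is the internal direct sum of the A*-submodules w_χ • M and (ε − w_χ) • M. -/
open TensorProduct

/-- A structure of left module over the convolution algebra `A*` on an `R`-module `M`:
an `R`-bilinear action of `A*` on `M` which is unital (the counit `ε` is the unit of the
convolution algebra) and associative for the convolution product. -/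
structure ConvModuleStruct (R A M : Type*) [CommRing R] [Ring A] [Bialgebra R A]
    [AddCommGroup M] [Module R M] where
  smul : Module.Dual R A →ₗ[R] M →ₗ[R] M
  counit_smul : ∀ m : M, smul Coalgebra.counit m = m
  conv_smul : ∀ (f g : Module.Dual R A) (m : M),
    smul (conv f g) m = smul f (smul g m)

/-- The `χ`-semi-invariants `M^χ` of a module `M` over the convolution algebra `A*`,
for `χ` the evaluation at a grouplike element `x`:
those `m` with `f • m = f(x) • m` for all `f ∈ A*`. -/
def ConvModuleStruct.semiInv {R A M : Type*} [CommRing R] [Ring A] [Bialgebra R A]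
    [AddCommGroup M] [Module R M] (μ : ConvModuleStruct R A M) (x : A) : Set M :=
  {m : M | ∀ f : Module.Dual R A, μ.smul f m = f x • m}

/-!
The integral `w` acts on `M` as an idempotent, because `w * w = w(x) • w = w`. Left
semi-invariance `f * w = f(x) • w` says precisely that `w • M ⊆ M^χ`, and normalization
`w(x) = 1` gives `w • m = m` on `M^χ`; so `M^χ = w • M` is the range of the projection
`w • -`, whose complement is its kernel `(ε - w) • M`. Right semi-invariance
`w * f = f(x) • w` makes that kernel stable under `A*`.
-/

namespace LinearMap

variable {R M : Type*} [Semiring R] [AddCommGroup M] [Module R M]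

theorem IsIdempotentElem.apply_add_of_mem_range_of_mem_ker {p : Module.End R M}
    (hp : IsIdempotentElem p) {m₁ m₂ : M} (h₁ : m₁ ∈ range p) (h₂ : m₂ ∈ ker p) :
    p (m₁ + m₂) = m₁ := by
  rw [map_add, (IsIdempotentElem.mem_range_iff hp).mp h₁, mem_ker.mp h₂, add_zero]

end LinearMap

namespace ConvModuleStruct

variable {R A M : Type*} [CommRing R] [Ring A] [Bialgebra R A] [AddCommGroup M] [Module R M]
  (μ : ConvModuleStruct R A M) {x : A} {w : Module.Dual R A}

def semiInvSubmodule (x : A) : Submodule R M where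
  carrier := μ.semiInv x
  zero_mem' _ := by rw [map_zero, smul_zero]
  add_mem' hm hm' f := by rw [map_add, hm f, hm' f, smul_add]
  smul_mem' r _ hm f := by rw [map_smul, hm f, smul_comm]

theorem smul_counit_sub (w : Module.Dual R A) :
    μ.smul (Coalgebra.counit - w) = 1 - μ.smul w := by
  rw [map_sub, show μ.smul Coalgebra.counit = 1 from LinearMap.ext μ.counit_smul]

theorem smul_smul_of_conv_left (hw : ∀ f, conv f w = f x • w) (f : Module.Dual R A) (m : M) :
    μ.smul f (μ.smul w m) = μ.smul w (f x • m) := by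
  rw [← μ.conv_smul, hw, map_smul, LinearMap.smul_apply, map_smul]

theorem smul_smul_of_conv_right (hw : ∀ f, conv w f = f x • w) (f : Module.Dual R A) (m : M) :
    μ.smul w (μ.smul f m) = f x • μ.smul w m := by
  rw [← μ.conv_smul, hw, map_smul, LinearMap.smul_apply]

theorem smul_mem_semiInv (hw : ∀ f, conv f w = f x • w) (m : M) :
    μ.smul w m ∈ μ.semiInv x := fun f => by
  rw [μ.smul_smul_of_conv_left hw, map_smul]

theorem smul_eq_self_of_mem_semiInv (hwx : w x = 1) {m : M} (hm : m ∈ μ.semiInv x) :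
    μ.smul w m = m := by
  rw [hm w, hwx, one_smul]

theorem semiInv_eq_range (hw : ∀ f, conv f w = f x • w) (hwx : w x = 1) :
    μ.semiInv x = Set.range (μ.smul w) :=
  Set.Subset.antisymm (fun m hm => ⟨m, μ.smul_eq_self_of_mem_semiInv hwx hm⟩)
    (Set.range_subset_iff.mpr (μ.smul_mem_semiInv hw))

theorem isIdempotentElem_smul (hw : ∀ f, conv f w = f x • w) (hwx : w x = 1) :
    IsIdempotentElem (μ.smul w) :=
  LinearMap.ext fun m => μ.smul_eq_self_of_mem_semiInv hwx (μ.smul_mem_semiInv hw m)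

theorem smul_mem_range_smul (hw : ∀ f, conv f w = f x • w) (f : Module.Dual R A) {m : M}
    (hm : m ∈ Set.range (μ.smul w)) : μ.smul f m ∈ Set.range (μ.smul w) := by
  obtain ⟨m', rfl⟩ := hm
  exact ⟨f x • m', (μ.smul_smul_of_conv_left hw f m').symm⟩

theorem smul_mem_ker_smul (hw : ∀ f, conv w f = f x • w) (f : Module.Dual R A) {m : M}
    (hm : m ∈ LinearMap.ker (μ.smul w)) : μ.smul f m ∈ LinearMap.ker (μ.smul w) := by
  rw [LinearMap.mem_ker, μ.smul_smul_of_conv_right hw, LinearMap.mem_ker.mp hm, smul_zero]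

theorem smul_add_smul_counit_sub (w : Module.Dual R A) (m : M) :
    μ.smul w m + μ.smul (Coalgebra.counit - w) m = m := by
  rw [μ.smul_counit_sub, LinearMap.sub_apply, Module.End.one_apply, add_sub_cancel]

theorem range_smul_counit_sub (hw : ∀ f, conv f w = f x • w) (hwx : w x = 1) :
    Set.range (μ.smul (Coalgebra.counit - w)) = LinearMap.ker (μ.smul w) := by
  rw [LinearMap.IsIdempotentElem.ker_eq_range_one_sub (μ.isIdempotentElem_smul hw hwx),
    ← μ.smul_counit_sub, LinearMap.coe_range]

end ConvModuleStruct

theorem semiinvariants_eq_and_direct_sum_general {R A M : Type*} [CommRing R] [Ring A]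
    [Bialgebra R A] [AddCommGroup M] [Module R M] (μ : ConvModuleStruct R A M)
    (x : A)
    (wχ : Module.Dual R A) (hwχ : IsNormalizedSemiInvIntegral x wχ) :
    -- `M^χ = wχ • M`
    (μ.semiInv x = Set.range (μ.smul wχ)) ∧
    -- `M^χ` is an `A*`-submodule of `M`
    ((0 : M) ∈ μ.semiInv x ∧
      (∀ m m' : M, m ∈ μ.semiInv x → m' ∈ μ.semiInv x → m + m' ∈ μ.semiInv x) ∧
      (∀ (r : R) (m : M), m ∈ μ.semiInv x → r • m ∈ μ.semiInv x) ∧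
      (∀ (f : Module.Dual R A) (m : M), m ∈ μ.semiInv x → μ.smul f m ∈ μ.semiInv x)) ∧
    -- `wχ • M` and `(ε - wχ) • M` are `A*`-submodules
    (∀ (f : Module.Dual R A) (m : M), m ∈ Set.range (μ.smul wχ) →
      μ.smul f m ∈ Set.range (μ.smul wχ)) ∧
    (∀ (f : Module.Dual R A) (m : M), m ∈ Set.range (μ.smul (Coalgebra.counit - wχ)) →
      μ.smul f m ∈ Set.range (μ.smul (Coalgebra.counit - wχ))) ∧
    -- `M` is the internal direct sum of `wχ • M` and `(ε - wχ) • M`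
    (∀ m : M, m = μ.smul wχ m + μ.smul (Coalgebra.counit - wχ) m) ∧
    (∀ (m m₁ m₂ : M), m₁ ∈ Set.range (μ.smul wχ) →
      m₂ ∈ Set.range (μ.smul (Coalgebra.counit - wχ)) → m = m₁ + m₂ →
      m₁ = μ.smul wχ m ∧ m₂ = μ.smul (Coalgebra.counit - wχ) m) := by
  obtain ⟨hleft, hright, hwx⟩ := hwχ
  have hrange := μ.semiInv_eq_range hleft hwx
  have hker := μ.range_smul_counit_sub hleft hwx
  refine ⟨hrange, ⟨(μ.semiInvSubmodule x).zero_mem, fun _ _ => (μ.semiInvSubmodule x).add_mem,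
    fun r _ => (μ.semiInvSubmodule x).smul_mem r, ?_⟩, fun f _ => μ.smul_mem_range_smul hleft f,
    ?_, fun m => (μ.smul_add_smul_counit_sub wχ m).symm, ?_⟩
  · rw [hrange]
    exact fun f _ => μ.smul_mem_range_smul hleft f
  · rw [hker]
    exact fun f _ => μ.smul_mem_ker_smul hright f
  · rintro m m₁ m₂ h₁ h₂ rfl
    rw [hker] at h₂
    have hp := LinearMap.IsIdempotentElem.apply_add_of_mem_range_of_mem_ker
      (μ.isIdempotentElem_smul hleft hwx) h₁ h₂
    have hsum := μ.smul_add_smul_counit_sub wχ (m₁ + m₂)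
    rw [hp] at hsum
    exact ⟨hp.symm, (add_left_cancel hsum).symm⟩

theorem semiinvariants_eq_and_direct_sum {R A M : Type*} [CommRing R] [Ring A]
    [Bialgebra R A] [AddCommGroup M] [Module R M] (μ : ConvModuleStruct R A M)
    (x : A) (hx : IsGroupLikeElem' R x)
    (wχ : Module.Dual R A) (hwχ : IsNormalizedSemiInvIntegral x wχ) :
    -- `M^χ = wχ • M`
    (μ.semiInv x = Set.range (μ.smul wχ)) ∧
    -- `M^χ` is an `A*`-submodule of `M`
    ((0 : M) ∈ μ.semiInv x ∧
      (∀ m m' : M, m ∈ μ.semiInv x → m' ∈ μ.semiInv x → m + m' ∈ μ.semiInv x) ∧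
      (∀ (r : R) (m : M), m ∈ μ.semiInv x → r • m ∈ μ.semiInv x) ∧
      (∀ (f : Module.Dual R A) (m : M), m ∈ μ.semiInv x → μ.smul f m ∈ μ.semiInv x)) ∧
    -- `wχ • M` and `(ε - wχ) • M` are `A*`-submodules
    (∀ (f : Module.Dual R A) (m : M), m ∈ Set.range (μ.smul wχ) →
      μ.smul f m ∈ Set.range (μ.smul wχ)) ∧
    (∀ (f : Module.Dual R A) (m : M), m ∈ Set.range (μ.smul (Coalgebra.counit - wχ)) →
      μ.smul f m ∈ Set.range (μ.smul (Coalgebra.counit - wχ))) ∧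
    -- `M` is the internal direct sum of `wχ • M` and `(ε - wχ) • M`
    (∀ m : M, m = μ.smul wχ m + μ.smul (Coalgebra.counit - wχ) m) ∧
    (∀ (m m₁ m₂ : M), m₁ ∈ Set.range (μ.smul wχ) →
      m₂ ∈ Set.range (μ.smul (Coalgebra.counit - wχ)) → m = m₁ + m₂ →
      m₁ = μ.smul wχ m ∧ m₂ = μ.smul (Coalgebra.counit - wχ) m) :=
  semiinvariants_eq_and_direct_sum_general μ x wχ hwχ
end
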